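/- For every fixed real β with 0 < β < 1, the function α ↦ f^Acc(α,β) is differentiable at every α with 0 < α < min(2β, 2(1-β)), with derivative equal to (1/2)·ln((β - α/2)/(1-α)) + (1/2)·ln((1 - β - α/2)/(1-α)) + ln 2, which equals (1/2)·ln(4x(1-x)) with x = (β - α/2)/(1-α). -/

import Mathlib

/-- Binary entropy function with natural logarithm (`Real.log 0 = 0` gives `H 0 = H 1 = 0`). -/
noncomputable def H (x : ℝ) : ℝ := -x * Real.log x - (1 - x) * Real.log (1 - x)

/-- Asymptotic input-output weight distribution of the rate-1 accumulator. -/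
noncomputable def fAcc (α β : ℝ) : ℝ :=
  (1 - β) * H (α / (2 * (1 - β))) + β * H (α / (2 * β)) - H α

/-!
`H` is Mathlib's `Real.binEntropy`, whose derivative is `log (1 - x) - log x`. In the rescaled
terms `c · H (α / 2c)` the factor `c` cancels the chain-rule factor `1 / 2c`, leaving
`½ log (c - α/2) - ½ log (α/2)` for `c = 1 - β` and `c = β`. The two copies of `-½ log (α/2)`
together with the `log α` coming from `-H α` give `log 2`.
-/

open Real

lemma H_eq_binEntropy : H = binEntropy := by
  funext x
  simp only [H, binEntropy, log_inv]
  ring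

lemma hasDerivAt_H {x : ℝ} (h0 : x ≠ 0) (h1 : x ≠ 1) :
    HasDerivAt H (log (1 - x) - log x) x :=
  H_eq_binEntropy ▸ hasDerivAt_binEntropy h0 h1

lemma hasDerivAt_mul_H_div_two_mul {a c : ℝ} (ha : 0 < a) (hac : a < 2 * c) :
    HasDerivAt (fun t => c * H (t / (2 * c)))
      ((1 / 2) * (log (c - a / 2) - log (a / 2))) a := by
  have hc : 0 < c := by linarith
  have hx0 : a / (2 * c) ≠ 0 := (div_pos ha (by positivity)).ne'
  have hx1 : a / (2 * c) ≠ 1 := ((div_lt_one (by positivity)).mpr hac).ne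
  have hlog : log (1 - a / (2 * c)) - log (a / (2 * c)) = log (c - a / 2) - log (a / 2) := by
    rw [← log_div (by grind) hx0, ← log_div (by linarith) (by positivity)]
    congr 1
    field_simp
  have hd := ((hasDerivAt_H hx0 hx1).comp a ((hasDerivAt_id a).div_const (2 * c))).const_mul c
  refine hd.congr_deriv ?_
  rw [hlog]
  field_simp

lemma half_log_add_half_log_one_sub_add_log_two {x : ℝ} (h0 : x ≠ 0) (h1 : 1 - x ≠ 0) :
    (1 / 2) * log x + (1 / 2) * log (1 - x) + log 2 = (1 / 2) * log (4 * x * (1 - x)) := by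
  rw [log_mul (by positivity) h1, log_mul (by norm_num) h0,
    show (4 : ℝ) = 2 ^ 2 by norm_num, log_pow]
  ring

theorem stmt_13_general (β : ℝ)
    (α : ℝ) (hα0 : 0 < α) (hαu : α < min (2 * β) (2 * (1 - β))) :
    HasDerivAt (fun a => fAcc a β)
      ((1 / 2) * Real.log ((β - α / 2) / (1 - α)) +
       (1 / 2) * Real.log ((1 - β - α / 2) / (1 - α)) + Real.log 2) α ∧
    (1 / 2) * Real.log ((β - α / 2) / (1 - α)) +
      (1 / 2) * Real.log ((1 - β - α / 2) / (1 - α)) + Real.log 2 =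
    (1 / 2) * Real.log (4 * ((β - α / 2) / (1 - α)) * (1 - (β - α / 2) / (1 - α))) := by
  obtain ⟨hαβ, hα1β⟩ := lt_min_iff.mp hαu
  have hp : 0 < β - α / 2 := by linarith
  have hq : 0 < 1 - β - α / 2 := by linarith
  have hr : 0 < 1 - α := by linarith
  have hone_sub : 1 - (β - α / 2) / (1 - α) = (1 - β - α / 2) / (1 - α) := by
    field_simp
    ring
  refine ⟨?_, hone_sub ▸ half_log_add_half_log_one_sub_add_log_two
    (div_pos hp hr).ne' (hone_sub ▸ (div_pos hq hr).ne')⟩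
  have hd := ((hasDerivAt_mul_H_div_two_mul hα0 hα1β).add
    (hasDerivAt_mul_H_div_two_mul hα0 hαβ)).sub (hasDerivAt_H hα0.ne' (by linarith))
  refine hd.congr_deriv ?_
  rw [log_div hp.ne' hr.ne', log_div hq.ne' hr.ne', log_div hα0.ne' two_ne_zero]
  ring

theorem stmt_13 (β : ℝ) (hβ0 : 0 < β) (hβ1 : β < 1)
    (α : ℝ) (hα0 : 0 < α) (hαu : α < min (2 * β) (2 * (1 - β))) :
    HasDerivAt (fun a => fAcc a β)
      ((1 / 2) * Real.log ((β - α / 2) / (1 - α)) +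
       (1 / 2) * Real.log ((1 - β - α / 2) / (1 - α)) + Real.log 2) α ∧
    (1 / 2) * Real.log ((β - α / 2) / (1 - α)) +
      (1 / 2) * Real.log ((1 - β - α / 2) / (1 - α)) + Real.log 2 =
    (1 / 2) * Real.log (4 * ((β - α / 2) / (1 - α)) * (1 - (β - α / 2) / (1 - α))) :=
  stmt_13_general β α hα0 hαu
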